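/- arXiv:2505.12063 — 8 statements merged into one kernel-verified Lean document; each statement's English description precedes it below -/
import Mathlib

section
/- Let x' be an interior point of X and y₀ ≠ y₁ in Y. Define the c-affine functions f_i(x) = -c(x,y_i) + c(x',y_i) for i = 0,1. Then the section S(f₀; f₁) = {x ∈ X : f₀(x) ≤ f₁(x)} has nonempty interior. -/
open Set Function

noncomputable section

/-- Points of `ℝⁿ`. -/
abbrev Ept (n : ℕ) := EuclideanSpace ℝ (Fin n)

/-- `-D_x c(x,y)`, the negative gradient of `c` in the first variable. -/
def nDx {n : ℕ} (c : Ept n → Ept n → ℝ) (x y : Ept n) : Ept n :=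
  -gradient (fun x' => c x' y) x

/-- `-D_y c(x,y)`, the negative gradient of `c` in the second variable. -/
def nDy {n : ℕ} (c : Ept n → Ept n → ℝ) (x y : Ept n) : Ept n :=
  -gradient (fun y' => c x y') y

/-- The mixed Hessian `D²_{xy} c (x,y)` as an `n × n` matrix. -/
def mixedHessian {n : ℕ} (c : Ept n → Ept n → ℝ) (x y : Ept n) :
    Matrix (Fin n) (Fin n) ℝ := fun i j =>
  fderiv ℝ (fun x' => fderiv ℝ (fun y' => c x' y') y (EuclideanSpace.single j 1)) x
    (EuclideanSpace.single i 1)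

/-- Frobenius norm of a matrix. -/
def frobNorm {n : ℕ} (M : Matrix (Fin n) (Fin n) ℝ) : ℝ :=
  Real.sqrt (∑ i, ∑ j, (M i j) ^ 2)

/-- Standing assumptions on the spaces `X`, `Y` and the cost `c`: compactness, nonempty
interiors, `C²` regularity, bi-twist, non-degeneracy, and `c`-convexity of `X` and `Y`
with respect to each other. -/
structure CostSetup {n : ℕ} (X Y : Set (Ept n)) (c : Ept n → Ept n → ℝ) : Prop where
  compactX : IsCompact X
  compactY : IsCompact Y
  intX : (interior X).Nonempty
  intY : (interior Y).Nonempty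
  smooth : ContDiff ℝ 2 (Function.uncurry c)
  twist : ∀ x ∈ X, Set.InjOn (fun y => nDx c x y) Y
  twistStar : ∀ y ∈ Y, Set.InjOn (fun x => nDy c x y) X
  nondeg : ∀ x ∈ X, ∀ y ∈ Y, IsUnit (mixedHessian c x y)
  cConvX : ∀ y ∈ Y, Convex ℝ ((fun x => nDy c x y) '' X)
  cConvY : ∀ x ∈ X, Convex ℝ ((fun y => nDx c x y) '' Y)

/-- Loeper's property. -/
def Loeper {n : ℕ} (X Y : Set (Ept n)) (c : Ept n → Ept n → ℝ) : Prop :=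
  ∀ x₀ ∈ X, ∀ x₁ ∈ X, ∀ y₀ ∈ Y, ∀ y ∈ Y, ∀ xt ∈ X, ∀ t ∈ Icc (0:ℝ) 1,
    nDy c xt y₀ = t • nDy c x₁ y₀ + (1 - t) • nDy c x₀ y₀ →
    -c xt y + c xt y₀ ≤ max (-c x₀ y + c x₀ y₀) (-c x₁ y + c x₁ y₀)

/-- The `c`-chord between `(x₀,u₀)` and `(x₁,u₁)`, evaluated at `x`. -/
def cChord {n : ℕ} (Y : Set (Ept n)) (c : Ept n → Ept n → ℝ)
    (x₀ x₁ : Ept n) (u₀ u₁ : ℝ) (x : Ept n) : ℝ :=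
  sSup {v : ℝ | ∃ y ∈ Y, ∃ h : ℝ, -c x₀ y + h ≤ u₀ ∧ -c x₁ y + h ≤ u₁ ∧ v = -c x y + h}

/-- Alternative `c`-convexity. -/
def AltCConvex {n : ℕ} (X Y : Set (Ept n)) (c : Ept n → Ept n → ℝ) (φ : Ept n → ℝ) : Prop :=
  ∀ x₀ ∈ X, ∀ x₁ ∈ X, ∀ x ∈ X, φ x ≤ cChord Y c x₀ x₁ (φ x₀) (φ x₁) x

/-- `c`-convexity: `φ` is a supremum of `c`-affine functions. -/
def CConvex {n : ℕ} (X Y : Set (Ept n)) (c : Ept n → Ept n → ℝ) (φ : Ept n → ℝ) : Prop :=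
  ∃ ψ : Ept n → EReal, (∃ y ∈ Y, ψ y ≠ ⊥) ∧ (∀ y, ψ y ≠ ⊤) ∧
    ∀ x ∈ X, (φ x : EReal) = ⨆ y ∈ Y, (((-c x y : ℝ) : EReal) + ψ y)

/-
`F x := c x y₀ - c x y₁` vanishes at `x'`, and by the twist condition its
differential there, `Dₓc(x', y₀) - Dₓc(x', y₁)`, is nonzero. So `x'` is not a local maximum
of `F`, and arbitrarily close to `x'`, inside `interior X`, there are points where `F > 0`,
i.e. where `f₀ < f₁` strictly. By continuity this strict inequality persists on an open set.
-/

open Filter Topology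

theorem frequently_lt_of_hasFDerivAt_ne_zero {E : Type*} [NormedAddCommGroup E]
    [NormedSpace ℝ E] {f : E → ℝ} {f' : E →L[ℝ] ℝ} {a : E} (hf : HasFDerivAt f f' a)
    (hf' : f' ≠ 0) : ∃ᶠ x in 𝓝 a, f a < f x := by
  have hmax : ¬IsLocalMax f a := fun h => hf' (h.hasFDerivAt_eq_zero hf)
  simpa only [IsLocalMax, IsMaxFilter, not_eventually, not_le] using hmax

theorem interior_sep_le_nonempty {α : Type*} [TopologicalSpace α] {s : Set α}
    {f g : α → ℝ} (hf : Continuous f) (hg : Continuous g) {a : α} (ha : a ∈ interior s)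
    (hfg : f a < g a) : (interior {x ∈ s | f x ≤ g x}).Nonempty :=
  ⟨a, mem_interior_iff_mem_nhds.2 <|
    mem_of_superset (inter_mem (mem_interior_iff_mem_nhds.1 ha) ((isOpen_lt hf hg).mem_nhds hfg))
      fun _ hx => ⟨hx.1, le_of_lt hx.2⟩⟩

section Cost

variable {n : ℕ} {c : Ept n → Ept n → ℝ}

theorem differentiable_cost_left (hc : ContDiff ℝ 2 (uncurry c)) (y : Ept n) :
    Differentiable ℝ (fun x => c x y) :=
  (hc.comp (contDiff_id.prodMk contDiff_const)).differentiable (by norm_num)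

theorem fderiv_cost_left_ne_of_injOn {Y : Set (Ept n)} {x : Ept n}
    (htwist : InjOn (fun y => nDx c x y) Y) {y₀ y₁ : Ept n} (hy₀ : y₀ ∈ Y) (hy₁ : y₁ ∈ Y)
    (hne : y₀ ≠ y₁) : fderiv ℝ (fun x => c x y₀) x ≠ fderiv ℝ (fun x => c x y₁) x := by
  intro h
  refine hne (htwist hy₀ hy₁ ?_)
  simp only [nDx, gradient, h]

end Cost

/-- the section of one `c`-affine function with respect to another has
nonempty interior, when both pass through an interior point `x'`. -/
theorem stmt_1 {n : ℕ} (X Y : Set (Ept n)) (c : Ept n → Ept n → ℝ)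
    (hsetup : CostSetup X Y c)
    (x' : Ept n) (hx' : x' ∈ interior X)
    (y₀ : Ept n) (hy₀ : y₀ ∈ Y) (y₁ : Ept n) (hy₁ : y₁ ∈ Y) (hne : y₀ ≠ y₁) :
    (interior {x ∈ X | -c x y₀ + c x' y₀ ≤ -c x y₁ + c x' y₁}).Nonempty := by
  have hdiff := differentiable_cost_left hsetup.smooth
  have hF : HasFDerivAt (fun x => c x y₀ - c x y₁)
      (fderiv ℝ (fun x => c x y₀) x' - fderiv ℝ (fun x => c x y₁) x') x' :=
    (hdiff y₀ x').hasFDerivAt.sub (hdiff y₁ x').hasFDerivAt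
  have hF' := sub_ne_zero.2 <|
    fderiv_cost_left_ne_of_injOn (hsetup.twist x' (interior_subset hx')) hy₀ hy₁ hne
  obtain ⟨x, hlt, hx⟩ := ((frequently_lt_of_hasFDerivAt_ne_zero hF hF').and_eventually
    (isOpen_interior.mem_nhds hx')).exists
  exact interior_sep_le_nonempty ((hdiff y₀).continuous.neg.add continuous_const)
    ((hdiff y₁).continuous.neg.add continuous_const) hx (by linarith)
end
end

section
/- Let x' ∈ X, y₀, y₁ ∈ Y with y₀ ≠ y₁, and f_i(x) = -c(x,y_i) + c(x',y_i) for i = 0,1. If f₀(x₀) = f₁(x₀) for some x₀ ∈ X, then x₀ lies on the boundary of the section S(f₀; f₁) = {x ∈ X : f₀(x) ≤ f₁(x)}. Consequently, the interior of S(f₀; f₁) is contained in {x ∈ X : f₀(x) < f₁(x)}, and {x ∈ X : f₀(x) = f₁(x)} ⊂ ∂S(f₀; f₁). -/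
open Set Function

noncomputable section

/-
Write `g x = c(x,y₀) - c(x,y₁)`, so that `f₁ - f₀ = g + const` and the section is
`{x ∈ X | g x ≥ g x₀}` whenever `f₀(x₀) = f₁(x₀)`. If `x₀` were an interior point of the
section, it would be a local minimum of `g`, so `D_x c(x₀,y₀) = D_x c(x₀,y₁)`, contradicting
the twist condition since `y₀ ≠ y₁`.
-/

theorem mem_frontier_of_hasFDerivAt_ne_zero {E : Type*} [NormedAddCommGroup E]
    [NormedSpace ℝ E] {g : E → ℝ} {L : E →L[ℝ] ℝ} {x₀ : E} {S : Set E}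
    (hg : HasFDerivAt g L x₀) (hL : L ≠ 0) (hx₀ : x₀ ∈ S) (hS : ∀ x ∈ S, g x₀ ≤ g x) :
    x₀ ∈ frontier S := by
  refine ⟨subset_closure hx₀, fun hint => hL (IsLocalMin.hasFDerivAt_eq_zero ?_ hg)⟩
  exact Filter.mem_of_superset (mem_interior_iff_mem_nhds.mp hint) hS

namespace CostSetup

variable {n : ℕ} {X Y : Set (Ept n)} {c : Ept n → Ept n → ℝ}

theorem differentiable_left (hsetup : CostSetup X Y c) (y : Ept n) :
    Differentiable ℝ (fun x => c x y) :=
  (hsetup.smooth.differentiable (by norm_num)).comp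
    (differentiable_id.prodMk (differentiable_const y))

theorem fderiv_left_ne (hsetup : CostSetup X Y c) {x y₀ y₁ : Ept n} (hx : x ∈ X)
    (hy₀ : y₀ ∈ Y) (hy₁ : y₁ ∈ Y) (hne : y₀ ≠ y₁) :
    fderiv ℝ (fun x => c x y₀) x ≠ fderiv ℝ (fun x => c x y₁) x := by
  intro h
  exact hne (hsetup.twist x hx hy₀ hy₁ (by simp only [nDx, gradient, h]))

theorem mem_frontier_section (hsetup : CostSetup X Y c) (x' : Ept n) {y₀ y₁ : Ept n}
    (hy₀ : y₀ ∈ Y) (hy₁ : y₁ ∈ Y) (hne : y₀ ≠ y₁) {x₀ : Ept n} (hx₀ : x₀ ∈ X)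
    (heq : -c x₀ y₀ + c x' y₀ = -c x₀ y₁ + c x' y₁) :
    x₀ ∈ frontier {x ∈ X | -c x y₀ + c x' y₀ ≤ -c x y₁ + c x' y₁} := by
  have hg : HasFDerivAt (fun x => c x y₀ - c x y₁)
      (fderiv ℝ (fun x => c x y₀) x₀ - fderiv ℝ (fun x => c x y₁) x₀) x₀ :=
    (hsetup.differentiable_left y₀ x₀).hasFDerivAt.sub
      (hsetup.differentiable_left y₁ x₀).hasFDerivAt
  refine mem_frontier_of_hasFDerivAt_ne_zero hg
    (sub_ne_zero.mpr (hsetup.fderiv_left_ne hx₀ hy₀ hy₁ hne)) ⟨hx₀, heq.le⟩ ?_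
  rintro x ⟨-, hx⟩
  linarith

end CostSetup

theorem stmt_2_general {n : ℕ} (X Y : Set (Ept n)) (c : Ept n → Ept n → ℝ)
    (hsetup : CostSetup X Y c)
    (x' : Ept n)
    (y₀ : Ept n) (hy₀ : y₀ ∈ Y) (y₁ : Ept n) (hy₁ : y₁ ∈ Y) (hne : y₀ ≠ y₁) :
    (∀ x₀ ∈ X, -c x₀ y₀ + c x' y₀ = -c x₀ y₁ + c x' y₁ →
      x₀ ∈ frontier {x ∈ X | -c x y₀ + c x' y₀ ≤ -c x y₁ + c x' y₁}) ∧
    interior {x ∈ X | -c x y₀ + c x' y₀ ≤ -c x y₁ + c x' y₁} ⊆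
      {x ∈ X | -c x y₀ + c x' y₀ < -c x y₁ + c x' y₁} ∧
    {x ∈ X | -c x y₀ + c x' y₀ = -c x y₁ + c x' y₁} ⊆
      frontier {x ∈ X | -c x y₀ + c x' y₀ ≤ -c x y₁ + c x' y₁} := by
  have key := fun x₀ (hx₀ : x₀ ∈ X) heq =>
    hsetup.mem_frontier_section x' hy₀ hy₁ hne hx₀ heq
  refine ⟨key, fun x hx => ?_, fun x hx => key x hx.1 hx.2⟩
  obtain ⟨hxX, hle⟩ := interior_subset hx
  refine ⟨hxX, hle.lt_of_ne fun heq => ?_⟩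
  exact (key x hxX heq).2 hx

/-- equality points of two `c`-affine functions lie on the boundary of the
section; consequently the interior of the section is where the strict inequality holds. -/
theorem stmt_2 {n : ℕ} (X Y : Set (Ept n)) (c : Ept n → Ept n → ℝ)
    (hsetup : CostSetup X Y c)
    (x' : Ept n) (hx' : x' ∈ X)
    (y₀ : Ept n) (hy₀ : y₀ ∈ Y) (y₁ : Ept n) (hy₁ : y₁ ∈ Y) (hne : y₀ ≠ y₁) :
    (∀ x₀ ∈ X, -c x₀ y₀ + c x' y₀ = -c x₀ y₁ + c x' y₁ →
      x₀ ∈ frontier {x ∈ X | -c x y₀ + c x' y₀ ≤ -c x y₁ + c x' y₁}) ∧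
    interior {x ∈ X | -c x y₀ + c x' y₀ ≤ -c x y₁ + c x' y₁} ⊆
      {x ∈ X | -c x y₀ + c x' y₀ < -c x y₁ + c x' y₁} ∧
    {x ∈ X | -c x y₀ + c x' y₀ = -c x y₁ + c x' y₁} ⊆
      frontier {x ∈ X | -c x y₀ + c x' y₀ ≤ -c x y₁ + c x' y₁} :=
  stmt_2_general X Y c hsetup x' y₀ hy₀ y₁ hy₁ hne
end
end

section
/- Let φ : X → ℝ be a c-convex function with X, Y compact and c continuous. Then for every x₀ ∈ X there exists y₀ ∈ Y which is a c-subdifferential of φ at x₀, i.e. -c(x,y₀) + c(x₀,y₀) + φ(x₀) ≤ φ(x) for all x ∈ X. -/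
open Set Function

noncomputable section

/-!
Every `c`-affine minorant `-c(·, y) + ψ(y)` lies below `φ`, so a `y` nearly attaining the
supremum defining `φ(x₀)` is an `ε`-subdifferential at `x₀`. The defect
`y ↦ sup_{x ∈ X} (-c(x,y) + c(x₀,y) + φ(x₀) - φ(x))` is lower semicontinuous on `Y`, being a
supremum of continuous functions, so it attains its infimum `≤ 0` on the compact set `Y`.
-/

theorem IsCompact.exists_forall_le_of_forall_le_add {α ι : Type*} [TopologicalSpace α]
    {Y : Set α} (hY : IsCompact Y) {X : Set ι} {g : ι → α → ℝ} {b : ι → ℝ}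
    (hg : ∀ i ∈ X, ContinuousOn (g i) Y)
    (happrox : ∀ ε > 0, ∃ y ∈ Y, ∀ i ∈ X, g i y ≤ b i + ε) :
    ∃ y ∈ Y, ∀ i ∈ X, g i y ≤ b i := by
  set F : α → EReal := fun y => ⨆ i ∈ X, ((g i y - b i : ℝ) : EReal)
  have hF : LowerSemicontinuousOn F Y := lowerSemicontinuousOn_biSup fun i hi =>
    (continuous_coe_real_ereal.comp_continuousOn
      ((hg i hi).sub continuousOn_const)).lowerSemicontinuousOn
  have hF_le : ∀ ε : ℝ, 0 < ε → ∃ y ∈ Y, F y ≤ ε := fun ε hε => by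
    obtain ⟨y, hy, hle⟩ := happrox ε hε
    exact ⟨y, hy, iSup₂_le fun i hi => EReal.coe_le_coe_iff.2 (by linarith [hle i hi])⟩
  obtain ⟨y₁, hy₁, -⟩ := hF_le 1 one_pos
  obtain ⟨y₀, hy₀, hmin⟩ := hF.exists_isMinOn ⟨y₁, hy₁⟩ hY
  have hF_nonpos : F y₀ ≤ 0 := EReal.le_of_forall_lt_iff_le.1 fun ε hε => by
    obtain ⟨y, hy, hle⟩ := hF_le ε (EReal.coe_pos.1 hε)
    exact (hmin hy).trans hle
  refine ⟨y₀, hy₀, fun i hi => ?_⟩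
  have hi_le : ((g i y₀ - b i : ℝ) : EReal) ≤ F y₀ :=
    le_iSup₂ (f := fun i (_ : i ∈ X) => ((g i y₀ - b i : ℝ) : EReal)) i hi
  linarith [EReal.coe_nonpos.1 (hi_le.trans hF_nonpos)]

theorem CConvex.exists_le_add {n : ℕ} {X Y : Set (Ept n)} {c : Ept n → Ept n → ℝ}
    {φ : Ept n → ℝ} (hφ : CConvex X Y c φ) {x₀ : Ept n} (hx₀ : x₀ ∈ X) {ε : ℝ} (hε : 0 < ε) :
    ∃ y ∈ Y, ∀ x ∈ X, -c x y + c x₀ y + φ x₀ ≤ φ x + ε := by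
  obtain ⟨ψ, -, hψ_top, hφψ⟩ := hφ
  have hlt : ((φ x₀ - ε : ℝ) : EReal) < ⨆ y ∈ Y, ((-c x₀ y : ℝ) : EReal) + ψ y := by
    rw [← hφψ x₀ hx₀]
    exact EReal.coe_lt_coe_iff.2 (by linarith)
  obtain ⟨y, hy, hlt⟩ : ∃ y ∈ Y, ((φ x₀ - ε : ℝ) : EReal) < ((-c x₀ y : ℝ) : EReal) + ψ y := by
    simpa only [lt_iSup_iff, exists_prop] using hlt
  have hψ_bot : ψ y ≠ ⊥ := by
    rintro h
    simp [h] at hlt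
  obtain ⟨r, hr⟩ : ∃ r : ℝ, ψ y = r := ⟨_, (EReal.coe_toReal (hψ_top y) hψ_bot).symm⟩
  have hminorant : ∀ x ∈ X, -c x y + r ≤ φ x := fun x hx => by
    have h := le_iSup₂ (f := fun y (_ : y ∈ Y) => ((-c x y : ℝ) : EReal) + ψ y) y hy
    rwa [← hφψ x hx, hr, ← EReal.coe_add, EReal.coe_le_coe_iff] at h
  rw [hr, ← EReal.coe_add, EReal.coe_lt_coe_iff] at hlt
  exact ⟨y, hy, fun x hx => by linarith [hminorant x hx]⟩

theorem stmt_4_general {n : ℕ} (X Y : Set (Ept n)) (c : Ept n → Ept n → ℝ)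
    (hY : IsCompact Y)
    (hc : ContinuousOn (Function.uncurry c) (X ×ˢ Y))
    (φ : Ept n → ℝ) (hφ : CConvex X Y c φ)
    (x₀ : Ept n) (hx₀ : x₀ ∈ X) :
    ∃ y₀ ∈ Y, ∀ x ∈ X, -c x y₀ + c x₀ y₀ + φ x₀ ≤ φ x := by
  have hcont : ∀ x ∈ X, ContinuousOn (fun y => -c x y + c x₀ y + φ x₀) Y := fun x hx =>
    ((hc.uncurry_left x hx).neg.add (hc.uncurry_left x₀ hx₀)).add continuousOn_const
  exact hY.exists_forall_le_of_forall_le_add hcont fun ε hε => hφ.exists_le_add hx₀ hε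

/-- every `c`-convex function admits a `c`-subdifferential at every point. -/
theorem stmt_4 {n : ℕ} (X Y : Set (Ept n)) (c : Ept n → Ept n → ℝ)
    (hX : IsCompact X) (hY : IsCompact Y)
    (hc : ContinuousOn (Function.uncurry c) (X ×ˢ Y))
    (φ : Ept n → ℝ) (hφ : CConvex X Y c φ)
    (x₀ : Ept n) (hx₀ : x₀ ∈ X) :
    ∃ y₀ ∈ Y, ∀ x ∈ X, -c x y₀ + c x₀ y₀ + φ x₀ ≤ φ x :=
  stmt_4_general X Y c hY hc φ hφ x₀ hx₀
end
end

section
/- For points X_i = (x_i, u_i) ∈ X × ℝ (i = 0,1), the c-chord satisfies F_{X₀X₁}(x) = sup of the union over i = 0,1 of the sets { -c(x,y) + c(x_i,y) + u_i : y ∈ Y, -c(x_{1-i},y) + c(x_i,y) + u_i ≤ u_{1-i} }. That is, the supremum defining the c-chord may be restricted to c-affine functions passing through one of the endpoints. -/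
open Set Function

noncomputable section

theorem stmt_5_general {n : ℕ} (Y : Set (Ept n)) (c : Ept n → Ept n → ℝ)
    (x₀ : Ept n) (x₁ : Ept n) (u₀ u₁ : ℝ)
    (x : Ept n) :
    cChord Y c x₀ x₁ u₀ u₁ x =
      sSup ({v : ℝ | ∃ y ∈ Y, -c x₁ y + c x₀ y + u₀ ≤ u₁ ∧ v = -c x y + c x₀ y + u₀} ∪
            {v : ℝ | ∃ y ∈ Y, -c x₀ y + c x₁ y + u₁ ≤ u₀ ∧ v = -c x y + c x₁ y + u₁}) := by
  refine csSup_eq_csSup_of_forall_exists_le ?_ ?_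
  · -- Raising `h` to `min (c x₀ y + u₀) (c x₁ y + u₁)` keeps both constraints and makes
    -- the `c`-affine function pass through the endpoint attaining the minimum.
    rintro _ ⟨y, hy, h, h₀, h₁, rfl⟩
    rcases le_total (c x₀ y + u₀) (c x₁ y + u₁) with hle | hle
    · exact ⟨_, Or.inl ⟨y, hy, by linarith, rfl⟩, by linarith⟩
    · exact ⟨_, Or.inr ⟨y, hy, by linarith, rfl⟩, by linarith⟩
  · rintro _ (⟨y, hy, hle, rfl⟩ | ⟨y, hy, hle, rfl⟩)
    · exact ⟨_, ⟨y, hy, c x₀ y + u₀, by linarith, by linarith, by ring⟩, le_rfl⟩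
    · exact ⟨_, ⟨y, hy, c x₁ y + u₁, by linarith, by linarith, by ring⟩, le_rfl⟩

/-- the supremum defining the `c`-chord may be restricted to `c`-affine
functions passing through one of the endpoints. -/
theorem stmt_5 {n : ℕ} (X Y : Set (Ept n)) (c : Ept n → Ept n → ℝ)
    (hX : IsCompact X) (hY : IsCompact Y)
    (hc : ContinuousOn (Function.uncurry c) (X ×ˢ Y))
    (x₀ : Ept n) (hx₀ : x₀ ∈ X) (x₁ : Ept n) (hx₁ : x₁ ∈ X) (u₀ u₁ : ℝ)
    (x : Ept n) (hx : x ∈ X) :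
    cChord Y c x₀ x₁ u₀ u₁ x =
      sSup ({v : ℝ | ∃ y ∈ Y, -c x₁ y + c x₀ y + u₀ ≤ u₁ ∧ v = -c x y + c x₀ y + u₀} ∪
            {v : ℝ | ∃ y ∈ Y, -c x₀ y + c x₁ y + u₁ ≤ u₀ ∧ v = -c x y + c x₁ y + u₁}) :=
  stmt_5_general Y c x₀ x₁ u₀ u₁ x
end
end

section
/- Let X_i = (x_i, u_i) ∈ X × ℝ for i = 0,1, and set u_i' = F_{X₀X₁}(x_i) and X_i' = (x_i, u_i'). Then F_{X₀X₁} = F_{X₀'X₁'} as functions on X. -/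
open Set Function

noncomputable section

/-!
At the endpoint `x₀` every admissible `c`-affine function `-c(·, y) + h` lies below `u₀`, so
`u₀' ≤ u₀`; conversely each of them lies below its supremum `u₀'` there. The same holds at `x₁`,
so the heights `(u₀, u₁)` and `(u₀', u₁')` admit exactly the same pairs `(y, h)`, and both chords
are suprema over the same set.
-/

section CChord

variable {n : ℕ} {Y : Set (Ept n)} {c : Ept n → Ept n → ℝ} {x₀ x₁ x y : Ept n} {u₀ u₁ h : ℝ}

def cChordValues (Y : Set (Ept n)) (c : Ept n → Ept n → ℝ) (x₀ x₁ : Ept n) (u₀ u₁ : ℝ)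
    (x : Ept n) : Set ℝ :=
  {v : ℝ | ∃ y ∈ Y, ∃ h : ℝ, -c x₀ y + h ≤ u₀ ∧ -c x₁ y + h ≤ u₁ ∧ v = -c x y + h}

theorem cChordValues_comm :
    cChordValues Y c x₁ x₀ u₁ u₀ x = cChordValues Y c x₀ x₁ u₀ u₁ x := by
  ext v
  exact exists_congr fun y => and_congr_right fun _ => exists_congr fun h => by tauto

theorem cChord_comm : cChord Y c x₁ x₀ u₁ u₀ = cChord Y c x₀ x₁ u₀ u₁ :=
  funext fun _ => congrArg sSup cChordValues_comm

theorem cChordValues_nonempty (hY : Y.Nonempty) :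
    (cChordValues Y c x₀ x₁ u₀ u₁ x).Nonempty := by
  obtain ⟨y, hy⟩ := hY
  exact ⟨_, y, hy, min (u₀ + c x₀ y) (u₁ + c x₁ y),
    by linarith [min_le_left (u₀ + c x₀ y) (u₁ + c x₁ y)],
    by linarith [min_le_right (u₀ + c x₀ y) (u₁ + c x₁ y)], rfl⟩

theorem cChordValues_left_subset_Iic : cChordValues Y c x₀ x₁ u₀ u₁ x₀ ⊆ Iic u₀ := by
  rintro _ ⟨y, -, h, h₀, -, rfl⟩
  exact h₀

theorem cChord_left_le (hY : Y.Nonempty) : cChord Y c x₀ x₁ u₀ u₁ x₀ ≤ u₀ :=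
  csSup_le (cChordValues_nonempty hY) cChordValues_left_subset_Iic

theorem cChord_right_le (hY : Y.Nonempty) : cChord Y c x₀ x₁ u₀ u₁ x₁ ≤ u₁ := by
  rw [← cChord_comm]
  exact cChord_left_le hY

theorem le_cChord_left (hy : y ∈ Y) (h₀ : -c x₀ y + h ≤ u₀) (h₁ : -c x₁ y + h ≤ u₁) :
    -c x₀ y + h ≤ cChord Y c x₀ x₁ u₀ u₁ x₀ :=
  le_csSup ⟨u₀, cChordValues_left_subset_Iic⟩ ⟨y, hy, h, h₀, h₁, rfl⟩

theorem le_cChord_right (hy : y ∈ Y) (h₀ : -c x₀ y + h ≤ u₀) (h₁ : -c x₁ y + h ≤ u₁) :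
    -c x₁ y + h ≤ cChord Y c x₀ x₁ u₀ u₁ x₁ := by
  rw [← cChord_comm]
  exact le_cChord_left hy h₁ h₀

theorem cChordValues_cChord_endpoints :
    cChordValues Y c x₀ x₁ (cChord Y c x₀ x₁ u₀ u₁ x₀) (cChord Y c x₀ x₁ u₀ u₁ x₁) x =
      cChordValues Y c x₀ x₁ u₀ u₁ x := by
  ext v
  constructor
  · rintro ⟨y, hy, h, h₀, h₁, rfl⟩
    exact ⟨y, hy, h, h₀.trans (cChord_left_le ⟨y, hy⟩), h₁.trans (cChord_right_le ⟨y, hy⟩), rfl⟩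
  · rintro ⟨y, hy, h, h₀, h₁, rfl⟩
    exact ⟨y, hy, h, le_cChord_left hy h₀ h₁, le_cChord_right hy h₀ h₁, rfl⟩

theorem cChord_cChord_endpoints :
    cChord Y c x₀ x₁ (cChord Y c x₀ x₁ u₀ u₁ x₀) (cChord Y c x₀ x₁ u₀ u₁ x₁) =
      cChord Y c x₀ x₁ u₀ u₁ :=
  funext fun _ => congrArg sSup cChordValues_cChord_endpoints

end CChord

theorem stmt_7_general {n : ℕ} (X Y : Set (Ept n)) (c : Ept n → Ept n → ℝ)
    (x₀ : Ept n) (x₁ : Ept n) (u₀ u₁ : ℝ) :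
    ∀ x ∈ X,
      cChord Y c x₀ x₁ (cChord Y c x₀ x₁ u₀ u₁ x₀) (cChord Y c x₀ x₁ u₀ u₁ x₁) x =
        cChord Y c x₀ x₁ u₀ u₁ x :=
  fun x _ => congrFun cChord_cChord_endpoints x

/-- replacing the heights `uᵢ` by the values of the `c`-chord at the
endpoints does not change the `c`-chord. -/
theorem stmt_7 {n : ℕ} (X Y : Set (Ept n)) (c : Ept n → Ept n → ℝ)
    (hX : IsCompact X) (hY : IsCompact Y) (hYne : Y.Nonempty)
    (hc : ContinuousOn (Function.uncurry c) (X ×ˢ Y))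
    (x₀ : Ept n) (hx₀ : x₀ ∈ X) (x₁ : Ept n) (hx₁ : x₁ ∈ X) (u₀ u₁ : ℝ) :
    ∀ x ∈ X,
      cChord Y c x₀ x₁ (cChord Y c x₀ x₁ u₀ u₁ x₀) (cChord Y c x₀ x₁ u₀ u₁ x₁) x =
        cChord Y c x₀ x₁ u₀ u₁ x :=
  stmt_7_general X Y c x₀ x₁ u₀ u₁
end
end

section
/- Suppose c satisfies Loeper's property. Let X_i = (x_i, u_i) ∈ X × ℝ and suppose y ∈ Y, h ∈ ℝ satisfy -c(x_i,y) + h = u_i for i = 0,1. Then for every point x_t on the c-segment with respect to y from x₀ to x₁, the c-chord satisfies F_{X₀X₁}(x_t) = -c(x_t, y) + h. -/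
open Set Function

noncomputable section

/-- The two `c`-affine functions differ by `-c(·, y') + c(·, y)` plus a constant, and Loeper's
property bounds that difference on the `c`-segment by its values at the ends. -/
theorem Loeper.le_of_le_of_le {n : ℕ} {X Y : Set (Ept n)} {c : Ept n → Ept n → ℝ}
    (hLoeper : Loeper X Y c) {x₀ x₁ xt y y' : Ept n} (hx₀ : x₀ ∈ X) (hx₁ : x₁ ∈ X)
    (hxt : xt ∈ X) (hy : y ∈ Y) (hy' : y' ∈ Y) {t : ℝ} (ht : t ∈ Icc (0 : ℝ) 1)
    (hseg : nDy c xt y = t • nDy c x₁ y + (1 - t) • nDy c x₀ y) {h h' : ℝ}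
    (h₀ : -c x₀ y' + h' ≤ -c x₀ y + h) (h₁ : -c x₁ y' + h' ≤ -c x₁ y + h) :
    -c xt y' + h' ≤ -c xt y + h := by
  have hends : max (-c x₀ y' + c x₀ y) (-c x₁ y' + c x₁ y) ≤ h - h' :=
    max_le (by linarith) (by linarith)
  linarith [hLoeper x₀ hx₀ x₁ hx₁ y hy y' hy' xt hxt t ht hseg]

theorem cChord_eq_of_forall_le {n : ℕ} {Y : Set (Ept n)} {c : Ept n → Ept n → ℝ}
    {x₀ x₁ x y : Ept n} {u₀ u₁ h : ℝ} (hy : y ∈ Y)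
    (h₀ : -c x₀ y + h ≤ u₀) (h₁ : -c x₁ y + h ≤ u₁)
    (hle : ∀ y' ∈ Y, ∀ h' : ℝ, -c x₀ y' + h' ≤ u₀ → -c x₁ y' + h' ≤ u₁ →
      -c x y' + h' ≤ -c x y + h) :
    cChord Y c x₀ x₁ u₀ u₁ x = -c x y + h := by
  refine IsGreatest.csSup_eq ⟨⟨y, hy, h, h₀, h₁, rfl⟩, ?_⟩
  rintro _ ⟨y', hy', h', h'₀, h'₁, rfl⟩
  exact hle y' hy' h' h'₀ h'₁

theorem stmt_9_general {n : ℕ} (X Y : Set (Ept n)) (c : Ept n → Ept n → ℝ)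
    (hLoeper : Loeper X Y c)
    (x₀ : Ept n) (hx₀ : x₀ ∈ X) (x₁ : Ept n) (hx₁ : x₁ ∈ X) (u₀ u₁ : ℝ)
    (y : Ept n) (hy : y ∈ Y) (h : ℝ)
    (hy₀ : -c x₀ y + h = u₀) (hy₁ : -c x₁ y + h = u₁) :
    ∀ xt ∈ X, ∀ t ∈ Icc (0:ℝ) 1,
      nDy c xt y = t • nDy c x₁ y + (1 - t) • nDy c x₀ y →
      cChord Y c x₀ x₁ u₀ u₁ xt = -c xt y + h := by
  intro xt hxt t ht hseg
  subst hy₀ hy₁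
  exact cChord_eq_of_forall_le hy le_rfl le_rfl fun y' hy' h' h'₀ h'₁ =>
    hLoeper.le_of_le_of_le hx₀ hx₁ hxt hy hy' ht hseg h'₀ h'₁

/-- under Loeper's property, the `c`-chord agrees with a connecting
`c`-affine function along the corresponding `c`-segment. -/
theorem stmt_9 {n : ℕ} (X Y : Set (Ept n)) (c : Ept n → Ept n → ℝ)
    (hsetup : CostSetup X Y c) (hLoeper : Loeper X Y c)
    (x₀ : Ept n) (hx₀ : x₀ ∈ X) (x₁ : Ept n) (hx₁ : x₁ ∈ X) (u₀ u₁ : ℝ)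
    (y : Ept n) (hy : y ∈ Y) (h : ℝ)
    (hy₀ : -c x₀ y + h = u₀) (hy₁ : -c x₁ y + h = u₁) :
    ∀ xt ∈ X, ∀ t ∈ Icc (0:ℝ) 1,
      nDy c xt y = t • nDy c x₁ y + (1 - t) • nDy c x₀ y →
      cChord Y c x₀ x₁ u₀ u₁ xt = -c xt y + h :=
  stmt_9_general X Y c hLoeper x₀ hx₀ x₁ hx₁ u₀ u₁ y hy h hy₀ hy₁
end
end

section
/- Suppose that for every X_i = (x_i,u_i) ∈ X × ℝ (i = 0,1) and every y ∈ Y, h ∈ ℝ with -c(x_i,y) + h = u_i for both i, the c-chord satisfies F_{X₀X₁}(x_t) = -c(x_t,y) + h for all x_t on the c-segment with respect to y from x₀ to x₁. Then c satisfies Loeper's property. -/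
open Set Function

noncomputable section

/-!
Take `u_i = -c(x_i, y₀)`, which is the `c`-affine function `-c(·, y₀)` at `x_i`; by hypothesis
its `c`-chord at a point `x_t` of the `c`-segment from `x₀` to `x₁` with respect to `y₀` equals
`-c(x_t, y₀)`. With `M = max_i (c(x_i, y₀) - c(x_i, y))`, the `c`-affine function `-c(·, y) - M`
lies below `u_i` at both `x_i`, so it is a competitor in the supremum defining the chord and
`-c(x_t, y) - M ≤ -c(x_t, y₀)`, which is Loeper's inequality.
-/

section CChord

variable {n : ℕ} {Y : Set (Ept n)} {c : Ept n → Ept n → ℝ} {x₀ x₁ x y : Ept n} {u₀ u₁ h : ℝ}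

theorem bddAbove_cChord_set (hY : IsCompact Y) (hc : ContinuousOn (fun y => c x₀ y - c x y) Y) :
    BddAbove {v : ℝ | ∃ y ∈ Y, ∃ h : ℝ,
      -c x₀ y + h ≤ u₀ ∧ -c x₁ y + h ≤ u₁ ∧ v = -c x y + h} := by
  obtain ⟨B, hB⟩ := hY.bddAbove_image hc
  refine ⟨B + u₀, ?_⟩
  rintro v ⟨y, hy, h, h₀, -, rfl⟩
  have hyB : c x₀ y - c x y ≤ B := hB (mem_image_of_mem _ hy)
  linarith

theorem le_cChord (hY : IsCompact Y) (hc : Continuous (uncurry c)) (hy : y ∈ Y)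
    (h₀ : -c x₀ y + h ≤ u₀) (h₁ : -c x₁ y + h ≤ u₁) :
    -c x y + h ≤ cChord Y c x₀ x₁ u₀ u₁ x := by
  have hdiff : ContinuousOn (fun y => c x₀ y - c x y) Y :=
    ((hc.comp (Continuous.prodMk_right x₀)).sub
      (hc.comp (Continuous.prodMk_right x))).continuousOn
  exact le_csSup (bddAbove_cChord_set hY hdiff) ⟨y, hy, h, h₀, h₁, rfl⟩

end CChord

/-- if the `c`-chord always agrees with connecting `c`-affine functions
along `c`-segments, then `c` satisfies Loeper's property. -/
theorem stmt_10 {n : ℕ} (X Y : Set (Ept n)) (c : Ept n → Ept n → ℝ)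
    (hsetup : CostSetup X Y c)
    (H : ∀ x₀ ∈ X, ∀ x₁ ∈ X, ∀ u₀ u₁ : ℝ, ∀ y ∈ Y, ∀ h : ℝ,
      -c x₀ y + h = u₀ → -c x₁ y + h = u₁ →
      ∀ xt ∈ X, ∀ t ∈ Icc (0:ℝ) 1,
        nDy c xt y = t • nDy c x₁ y + (1 - t) • nDy c x₀ y →
        cChord Y c x₀ x₁ u₀ u₁ xt = -c xt y + h) :
    Loeper X Y c := by
  intro x₀ hx₀ x₁ hx₁ y₀ hy₀ y hy xt hxt t ht hseg
  set M := max (-c x₀ y + c x₀ y₀) (-c x₁ y + c x₁ y₀)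
  have hchord : cChord Y c x₀ x₁ (-c x₀ y₀) (-c x₁ y₀) xt = -c xt y₀ + 0 :=
    H x₀ hx₀ x₁ hx₁ _ _ y₀ hy₀ 0 (by ring) (by ring) xt hxt t ht hseg
  have hcompetitor : -c xt y + -M ≤ cChord Y c x₀ x₁ (-c x₀ y₀) (-c x₁ y₀) xt :=
    le_cChord hsetup.compactY hsetup.smooth.continuous hy
      (by linarith [le_max_left (-c x₀ y + c x₀ y₀) (-c x₁ y + c x₁ y₀)])
      (by linarith [le_max_right (-c x₀ y + c x₀ y₀) (-c x₁ y + c x₁ y₀)])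
  linarith
end
end

section
/- Suppose c does not satisfy Loeper's property, and that the interiors of X and Y are dense in X and Y respectively. Then there exist y₀, y₁ ∈ Int Y, x₀, x₁ ∈ Int X, h₁' ∈ ℝ and a point x_{t₀} on the c-segment with respect to y₀ strictly between x₀ and x₁ such that -c(x_i, y₁) + h₁' < -c(x_i, y₀) for i = 0,1, while -c(x_{t₀}, y₁) + h₁' > -c(x_{t₀}, y₀). -/
open Set Function

noncomputable section

/-!
Perturb `x₀, x₁, y₀, y₁` to nearby interior points and take, over the perturbed data, the point
of the `c`-segment with the same parameter `t`. Since `X` is compact, `-D_y c` is continuous and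
`x ↦ -D_y c(x, y₀)` is injective on `X`, these points converge to `x_t`. The Loeper violation
`-c(x_t, y₁) + c(x_t, y₀) > max_i (-c(x_i, y₁) + c(x_i, y₀))` is an open condition, so it survives
the perturbation, and `h₁'` is any number separating the two sides. Finally `t ≠ 0, 1`, because at
the endpoints injectivity forces `x_t = x₀` or `x_t = x₁`.
-/

open Filter Topology

lemma nDy_eq_toDual_symm {n : ℕ} {c : Ept n → Ept n → ℝ} {x y : Ept n}
    (hc : DifferentiableAt ℝ (uncurry c) (x, y)) :
    nDy c x y = -(InnerProductSpace.toDual ℝ (Ept n)).symm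
      ((fderiv ℝ (uncurry c) (x, y)).comp (ContinuousLinearMap.inr ℝ (Ept n) (Ept n))) := by
  have hfd : fderiv ℝ (fun y' => c x y') y =
      (fderiv ℝ (uncurry c) (x, y)).comp (ContinuousLinearMap.inr ℝ (Ept n) (Ept n)) :=
    (hc.hasFDerivAt.comp y (hasFDerivAt_prodMk_right x y)).fderiv
  rw [nDy, gradient, hfd]

lemma continuous_nDy {n : ℕ} {c : Ept n → Ept n → ℝ} (hc : ContDiff ℝ 1 (uncurry c)) :
    Continuous fun p : Ept n × Ept n => nDy c p.1 p.2 := by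
  simp only [nDy_eq_toDual_symm (hc.differentiable one_ne_zero _)]
  exact ((InnerProductSpace.toDual ℝ (Ept n)).symm.continuous.comp
    ((hc.continuous_fderiv one_ne_zero).clm_comp continuous_const)).neg

lemma Filter.Tendsto.nDy {n : ℕ} {c : Ept n → Ept n → ℝ} (hc : ContDiff ℝ 1 (uncurry c))
    {ι : Type*} {l : Filter ι} {u v : ι → Ept n} {x y : Ept n} (hu : Tendsto u l (𝓝 x))
    (hv : Tendsto v l (𝓝 y)) : Tendsto (fun i => nDy c (u i) (v i)) l (𝓝 (nDy c x y)) :=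
  ((continuous_nDy hc).tendsto (x, y)).comp (f := fun i => (u i, v i)) (hu.prodMk_nhds hv)

lemma MapClusterPt.prodMk_of_tendsto {ι α β : Type*} [TopologicalSpace α] [TopologicalSpace β]
    {l : Filter ι} {u : ι → α} {v : ι → β} {a : α} {b : β}
    (hu : MapClusterPt a l u) (hv : Tendsto v l (𝓝 b)) :
    MapClusterPt (a, b) l fun i => (u i, v i) := by
  rw [((𝓝 a).basis_sets.prod_nhds (𝓝 b).basis_sets).mapClusterPt_iff_frequently]
  rintro ⟨s, t⟩ ⟨hs, ht⟩
  exact (mapClusterPt_iff_frequently.1 hu s hs).and_eventually (hv ht)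

lemma tendsto_of_tendsto_apply_of_injOn {ι α β γ : Type*} [TopologicalSpace α]
    [TopologicalSpace β] [TopologicalSpace γ] [T2Space γ] {f : α → β → γ}
    (hf : Continuous fun p : α × β => f p.1 p.2) {K : Set α} (hK : IsCompact K) {b : β}
    (hinj : InjOn (f · b) K) {l : Filter ι} {u : ι → α} {v : ι → β}
    (hu : ∀ᶠ i in l, u i ∈ K) (hv : Tendsto v l (𝓝 b)) {a : α} (ha : a ∈ K)
    (h : Tendsto (fun i => f (u i) (v i)) l (𝓝 (f a b))) : Tendsto u l (𝓝 a) := by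
  refine hK.tendsto_nhds_of_unique_mapClusterPt hu fun x hx hux => hinj hx ha ?_
  have hfx : MapClusterPt (f x b) l fun i => f (u i) (v i) :=
    (hux.prodMk_of_tendsto hv).continuousAt_comp hf.continuousAt
  exact eq_of_nhds_neBot (hfx.neBot.mono (inf_le_inf_left _ h))

section CostLemmas

variable {n : ℕ} {X : Set (Ept n)} {c : Ept n → Ept n → ℝ}

lemma exists_mem_cSegment {y x₀ x₁ : Ept n} (hX : Convex ℝ ((fun x => nDy c x y) '' X))
    (hx₀ : x₀ ∈ X) (hx₁ : x₁ ∈ X) {t : ℝ} (ht : t ∈ Icc (0 : ℝ) 1) :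
    ∃ x ∈ X, nDy c x y = t • nDy c x₁ y + (1 - t) • nDy c x₀ y := by
  simpa only [mem_image] using
    hX (mem_image_of_mem _ hx₁) (mem_image_of_mem _ hx₀) ht.1 (sub_nonneg.2 ht.2) (by ring)

lemma tendsto_of_mem_cSegment {ι : Type*} {l : Filter ι} (hX : IsCompact X)
    (hc : ContDiff ℝ 1 (uncurry c)) {x₀ x₁ xt y₀ : Ept n}
    (hinj : InjOn (fun x => nDy c x y₀) X) (hxt : xt ∈ X) {t : ℝ}
    (hseg : nDy c xt y₀ = t • nDy c x₁ y₀ + (1 - t) • nDy c x₀ y₀)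
    {a b xs d : ι → Ept n} (ha : Tendsto a l (𝓝 x₀)) (hb : Tendsto b l (𝓝 x₁))
    (hd : Tendsto d l (𝓝 y₀)) (hxs : ∀ i, xs i ∈ X)
    (hsegs : ∀ i, nDy c (xs i) (d i) = t • nDy c (b i) (d i) + (1 - t) • nDy c (a i) (d i)) :
    Tendsto xs l (𝓝 xt) := by
  refine tendsto_of_tendsto_apply_of_injOn (f := nDy c) (continuous_nDy hc) hX hinj
    (.of_forall hxs) hd hxt ?_
  simp only [hsegs, hseg]
  exact ((hb.nDy hc hd).const_smul t).add ((ha.nDy hc hd).const_smul (1 - t))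

lemma tendsto_cost_sub_cost (hc : Continuous (uncurry c)) {ι : Type*} {l : Filter ι}
    {v w : ι → Ept n} {y₀ y : Ept n} (hv : Tendsto v l (𝓝 y₀)) (hw : Tendsto w l (𝓝 y))
    {u : ι → Ept n} {x : Ept n} (hu : Tendsto u l (𝓝 x)) :
    Tendsto (fun i => -c (u i) (w i) + c (u i) (v i)) l (𝓝 (-c x y + c x y₀)) :=
  (((hc.tendsto _).comp (hu.prodMk_nhds hw)).neg).add ((hc.tendsto _).comp (hu.prodMk_nhds hv))

lemma mem_Ioo_of_not_loeper_at {x₀ x₁ xt y₀ y : Ept n}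
    (hinj : InjOn (fun x => nDy c x y₀) X) (hx₀ : x₀ ∈ X) (hx₁ : x₁ ∈ X) (hxt : xt ∈ X)
    {t : ℝ} (ht : t ∈ Icc (0 : ℝ) 1)
    (hseg : nDy c xt y₀ = t • nDy c x₁ y₀ + (1 - t) • nDy c x₀ y₀)
    (hgt : max (-c x₀ y + c x₀ y₀) (-c x₁ y + c x₁ y₀) < -c xt y + c xt y₀) :
    t ∈ Ioo (0 : ℝ) 1 := by
  refine ⟨ht.1.lt_of_ne ?_, ht.2.lt_of_ne ?_⟩
  · rintro rfl
    obtain rfl : xt = x₀ := hinj hxt hx₀ (by simpa using hseg)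
    exact (le_max_left _ _).not_gt hgt
  · rintro rfl
    obtain rfl : xt = x₁ := hinj hxt hx₁ (by simpa using hseg)
    exact (le_max_right _ _).not_gt hgt

end CostLemmas

/-- if Loeper's property fails, it fails with interior points and with
strict inequalities at the endpoints. -/
theorem stmt_17 {n : ℕ} (X Y : Set (Ept n)) (c : Ept n → Ept n → ℝ)
    (hsetup : CostSetup X Y c)
    (hdX : X ⊆ closure (interior X)) (hdY : Y ⊆ closure (interior Y))
    (hnL : ¬ Loeper X Y c) :
    ∃ y₀ ∈ interior Y, ∃ y₁ ∈ interior Y, ∃ x₀ ∈ interior X, ∃ x₁ ∈ interior X,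
      ∃ h₁' : ℝ, ∃ xt ∈ X, ∃ t ∈ Ioo (0:ℝ) 1,
        nDy c xt y₀ = t • nDy c x₁ y₀ + (1 - t) • nDy c x₀ y₀ ∧
        -c x₀ y₁ + h₁' < -c x₀ y₀ ∧
        -c x₁ y₁ + h₁' < -c x₁ y₀ ∧
        -c xt y₁ + h₁' > -c xt y₀ := by
  simp only [Loeper, not_forall, not_le, exists_prop] at hnL
  obtain ⟨x₀, hx₀, x₁, hx₁, y₀, hy₀, y₁, hy₁, xt, hxt, t, ht, hseg, hgt⟩ := hnL
  have hinj := hsetup.twistStar y₀ hy₀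
  have hc1 : ContDiff ℝ 1 (uncurry c) := hsetup.smooth.of_le (by norm_num)
  obtain ⟨a, haI, ha⟩ := mem_closure_iff_seq_limit.1 (hdX hx₀)
  obtain ⟨b, hbI, hb⟩ := mem_closure_iff_seq_limit.1 (hdX hx₁)
  obtain ⟨d, hdI, hd⟩ := mem_closure_iff_seq_limit.1 (hdY hy₀)
  obtain ⟨e, heI, he⟩ := mem_closure_iff_seq_limit.1 (hdY hy₁)
  choose xs hxs hsegs using fun k => exists_mem_cSegment
    (hsetup.cConvX _ (interior_subset (hdI k))) (interior_subset (haI k))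
    (interior_subset (hbI k)) ht
  have hxs_lim := tendsto_of_mem_cSegment hsetup.compactX hc1 hinj hxt hseg ha hb hd hxs hsegs
  have hcost {u : ℕ → Ept n} {x : Ept n} (hu : Tendsto u atTop (𝓝 x)) :=
    tendsto_cost_sub_cost hc1.continuous hd he hu
  obtain ⟨k, hk₀, hk₁⟩ := (((hcost ha).eventually_lt (hcost hxs_lim)
    ((le_max_left _ _).trans_lt hgt)).and ((hcost hb).eventually_lt
    (hcost hxs_lim) ((le_max_right _ _).trans_lt hgt))).exists
  obtain ⟨m, hm, hmV⟩ := exists_between (max_lt hk₀ hk₁)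
  obtain ⟨hAm, hBm⟩ := max_lt_iff.1 hm
  refine ⟨d k, hdI k, e k, heI k, a k, haI k, b k, hbI k, -m, xs k, hxs k, t,
    mem_Ioo_of_not_loeper_at hinj hx₀ hx₁ hxt ht hseg hgt, hsegs k, ?_, ?_, ?_⟩ <;> linarith
end
end
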